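/- arXiv:2009.13669 — 3 statements merged into one kernel-verified Lean document; each statement's English description precedes it below -/
import Mathlib

section
/- Let n ≥ 1, b ≥ 1, r ≥ 2 be integers. Let L = {x ∈ ℤ^r : ∑_i x_i = 0} and Λ = {x ∈ L : n divides b(x_i − x_j) for all i, j}. Then Λ has finite index in L and [L : Λ] = n^{r−1} / (gcd(br, n) · gcd(b, n)^{r−2}). -/
/-!
Put `g = gcd b n` and `m = n / g`. Since `b / g` is prime to `m`, `n ∣ b z ↔ m ∣ z`, so `Λ` is the
kernel of `x ↦ (xᵢ - x_{i₀} mod m)ᵢ` on `L`. The image of `L` consists of the `v ∈ (ℤ/m)^r` with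
`v_{i₀} = 0` whose coordinate sum lies in the image of `-r x_{i₀}`, i.e. vanishes modulo
`d = gcd r m` (Bezout: `rℤ + mℤ = dℤ`). Hence `[L : Λ] = m^r / (m d) = m^(r-1) / d`, and
`gcd (b r) n = g d` turns this into the stated formula.
-/

open Finset

theorem Nat.gcd_mul_right_of_coprime {b m : ℕ} (hco : Nat.Coprime b m) (g : ℕ) :
    Nat.gcd (b * g) (m * g) = g := by
  rw [Nat.gcd_mul_right, hco.gcd_eq_one, one_mul]

theorem Nat.intCast_dvd_mul_iff_dvd_div_gcd {n b : ℕ} (h : 0 < Nat.gcd b n) (z : ℤ) :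
    (n : ℤ) ∣ b * z ↔ ((n / Nat.gcd b n : ℕ) : ℤ) ∣ z := by
  obtain ⟨g, b', m, hg, hco, rfl, rfl⟩ := Nat.exists_coprime' h
  rw [Nat.gcd_mul_right_of_coprime hco, Nat.mul_div_cancel _ hg]
  push_cast
  rw [mul_comm (m : ℤ), mul_comm (b' : ℤ), mul_assoc, mul_dvd_mul_iff_left (by positivity)]
  exact ⟨(Nat.isCoprime_iff_coprime.mpr hco.symm).dvd_of_dvd_mul_left, fun h => h.mul_left _⟩

theorem Nat.gcd_mul_eq_gcd_mul_gcd_div (b r n : ℕ) :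
    Nat.gcd (b * r) n = Nat.gcd b n * Nat.gcd r (n / Nat.gcd b n) := by
  rcases Nat.eq_zero_or_pos (Nat.gcd b n) with h | h
  · simp [Nat.gcd_eq_zero_iff.mp h]
  obtain ⟨g, b', m, hg, hco, rfl, rfl⟩ := Nat.exists_coprime' h
  rw [Nat.gcd_mul_right_of_coprime hco, Nat.mul_div_cancel _ hg, mul_right_comm,
    Nat.gcd_mul_right, hco.gcd_mul_left_cancel, mul_comm]

variable {ι : Type*}

def diffMod (m : ℕ) (i₀ : ι) : (ι → ℤ) →+ (ι → ZMod m) where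
  toFun x i := ((x i - x i₀ : ℤ) : ZMod m)
  map_zero' := by ext; simp
  map_add' x y := by ext; simp only [Pi.add_apply]; push_cast; ring

theorem diffMod_apply (m : ℕ) (i₀ : ι) (x : ι → ℤ) (i : ι) :
    diffMod m i₀ x i = ((x i - x i₀ : ℤ) : ZMod m) := rfl

theorem diffMod_eq_zero_iff {m : ℕ} {i₀ : ι} {x : ι → ℤ} :
    diffMod m i₀ x = 0 ↔ ∀ i j, (m : ℤ) ∣ x i - x j := by
  simp only [funext_iff, diffMod_apply, Pi.zero_apply, ZMod.intCast_zmod_eq_zero_iff_dvd]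
  refine ⟨fun h i j => ?_, fun h i => h i i₀⟩
  simpa using dvd_sub (h i) (h j)

def sumZero (ι : Type*) [Fintype ι] : AddSubgroup (ι → ℤ) :=
  (∑ i, Pi.evalAddMonoidHom (fun _ : ι => ℤ) i).ker

variable [Fintype ι]

theorem mem_sumZero {x : ι → ℤ} : x ∈ sumZero ι ↔ ∑ i, x i = 0 := by
  simp [sumZero, AddMonoidHom.finsetSum_apply]

def evalSumMod (m : ℕ) (i₀ : ι) :
    (ι → ZMod m) →+ ZMod m × ZMod (Nat.gcd (Fintype.card ι) m) :=
  (Pi.evalAddMonoidHom _ i₀).prod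
    ((ZMod.castHom (Nat.gcd_dvd_right _ _) _).toAddMonoidHom.comp
      (∑ i, Pi.evalAddMonoidHom _ i))

theorem evalSumMod_apply (m : ℕ) (i₀ : ι) (v : ι → ZMod m) :
    evalSumMod m i₀ v = (v i₀, ZMod.castHom (Nat.gcd_dvd_right _ _) _ (∑ i, v i)) := by
  simp [evalSumMod, AddMonoidHom.finsetSum_apply]

theorem evalSumMod_surjective (m : ℕ) (i₀ : ι) :
    Function.Surjective (evalSumMod m i₀) := by
  classical
  rintro ⟨a, c⟩
  set π := ZMod.castHom (Nat.gcd_dvd_right (Fintype.card ι) m) (ZMod (Nat.gcd (Fintype.card ι) m))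
  obtain ⟨c, rfl⟩ := ZMod.ringHom_surjective π c
  refine ⟨fun i => (a - c) + Pi.single (M := fun _ => ZMod m) i₀ c i, ?_⟩
  have hcard : π (Fintype.card ι : ZMod m) = 0 := by
    rw [map_natCast, ZMod.natCast_eq_zero_iff]; exact Nat.gcd_dvd_left _ _
  rw [evalSumMod_apply, Prod.mk.injEq, Finset.sum_add_distrib, Finset.sum_pi_single', sum_const,
    card_univ, nsmul_eq_mul, map_add, map_mul, hcard, zero_mul, zero_add]
  exact ⟨by simp, by rw [if_pos (mem_univ _)]⟩

theorem evalSumMod_diffMod_of_mem_sumZero (m : ℕ) (i₀ : ι) {x : ι → ℤ} (hx : x ∈ sumZero ι) :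
    evalSumMod m i₀ (diffMod m i₀ x) = 0 := by
  have hsum : ∑ i, diffMod m i₀ x i = ((-(Fintype.card ι * x i₀) : ℤ) : ZMod m) := by
    simp only [diffMod_apply, ← Int.cast_sum, sum_sub_distrib, mem_sumZero.mp hx, sum_const,
      card_univ, nsmul_eq_mul, zero_sub]
  rw [evalSumMod_apply, hsum, map_intCast, Prod.mk_eq_zero, ZMod.intCast_zmod_eq_zero_iff_dvd,
    dvd_neg]
  exact ⟨by simp [diffMod_apply],
    (Int.natCast_dvd_natCast.mpr (Nat.gcd_dvd_left _ _)).mul_right _⟩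

theorem exists_mem_sumZero_diffMod_eq (m : ℕ) (i₀ : ι) {v : ι → ZMod m}
    (hv : evalSumMod m i₀ v = 0) : ∃ y ∈ sumZero ι, diffMod m i₀ y = v := by
  classical
  rw [evalSumMod_apply, Prod.mk_eq_zero] at hv
  obtain ⟨hv₀, hvsum⟩ := hv
  set w : ι → ℤ := fun i => (v i).cast
  have hw : ∀ i, (w i : ZMod m) = v i := fun i => ZMod.intCast_zmod_cast _
  have hdvd : ((Nat.gcd (Fintype.card ι) m : ℕ) : ℤ) ∣ ∑ i, w i := by
    rw [← ZMod.intCast_zmod_eq_zero_iff_dvd, ← hvsum, ← map_intCast (ZMod.castHom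
      (Nat.gcd_dvd_right (Fintype.card ι) m) (ZMod (Nat.gcd (Fintype.card ι) m))), Int.cast_sum]
    simp only [hw]
  obtain ⟨k, hk⟩ := hdvd
  set α := Int.gcdA (Fintype.card ι) m * k
  set β := Int.gcdB (Fintype.card ι) m * k
  have hbezout : ∑ i, w i = Fintype.card ι * α + m * β := by
    rw [hk, ← Int.gcd_natCast_natCast, Int.gcd_eq_gcd_ab]; ring
  refine ⟨w - ((fun _ => α) + Pi.single i₀ ((m : ℤ) * β)), ?_, ?_⟩
  · rw [mem_sumZero]
    simp [sum_sub_distrib, sum_add_distrib, hbezout]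
  · ext i
    have hsingle : ((Pi.single i₀ ((m : ℤ) * β) : ι → ℤ) i : ZMod m) = 0 := by
      rcases eq_or_ne i i₀ with rfl | h <;> simp [*]
    simp [diffMod_apply, hw, hv₀, hsingle]

theorem range_diffMod_comp_subtype (m : ℕ) (i₀ : ι) :
    ((diffMod m i₀).comp (sumZero ι).subtype).range = (evalSumMod m i₀).ker := by
  ext v
  refine ⟨?_, fun hv => ?_⟩
  · rintro ⟨x, rfl⟩
    exact evalSumMod_diffMod_of_mem_sumZero m i₀ x.2
  · obtain ⟨y, hy, rfl⟩ := exists_mem_sumZero_diffMod_eq m i₀ hv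
    exact ⟨⟨y, hy⟩, rfl⟩

theorem index_ker_diffMod_comp_subtype (m : ℕ) [NeZero m] (i₀ : ι) :
    ((diffMod m i₀).comp (sumZero ι).subtype).ker.index * Nat.gcd (Fintype.card ι) m =
      m ^ (Fintype.card ι - 1) := by
  set d := Nat.gcd (Fintype.card ι) m
  have hker : Nat.card (evalSumMod m i₀).ker * (m * d) = m ^ Fintype.card ι := by
    have := (evalSumMod m i₀).ker.card_mul_index
    rwa [AddSubgroup.index_ker, AddMonoidHom.range_eq_top_of_surjective _
      (evalSumMod_surjective m i₀), Nat.card_congr AddSubgroup.topEquiv.toEquiv, Nat.card_prod,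
      Nat.card_zmod, Nat.card_zmod, Nat.card_fun, Nat.card_zmod,
      Nat.card_eq_fintype_card (α := ι)] at this
  have hpow : m ^ Fintype.card ι = m * m ^ (Fintype.card ι - 1) := by
    rw [← pow_succ', Nat.sub_add_cancel (Fintype.card_pos_iff.mpr ⟨i₀⟩)]
  rw [AddSubgroup.index_ker, range_diffMod_comp_subtype]
  exact Nat.eq_of_mul_eq_mul_left (Nat.pos_of_ne_zero (NeZero.ne m))
    (by rw [← hpow, ← hker]; ring)

theorem stmt_3_general (n b r : ℕ) (hn : 1 ≤ n) (hr : 2 ≤ r)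
    (L : AddSubgroup (Fin r → ℤ)) (hL : ∀ x, x ∈ L ↔ (∑ i, x i) = 0)
    (Λ : AddSubgroup L)
    (hΛ : ∀ x : L, x ∈ Λ ↔ ∀ i j : Fin r, (n : ℤ) ∣ (b : ℤ) * ((x : Fin r → ℤ) i - (x : Fin r → ℤ) j)) :
    Λ.index ≠ 0 ∧
      Λ.index * (Nat.gcd (b * r) n * Nat.gcd b n ^ (r - 2)) = n ^ (r - 1) := by
  obtain rfl : L = sumZero (Fin r) := AddSubgroup.ext fun x => (hL x).trans mem_sumZero.symm
  have hg : 0 < Nat.gcd b n := Nat.gcd_pos_of_pos_right b hn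
  set m := n / Nat.gcd b n
  have hmn : m * Nat.gcd b n = n := Nat.div_mul_cancel (Nat.gcd_dvd_right b n)
  have : NeZero m := ⟨by rintro h; rw [h, zero_mul] at hmn; omega⟩
  have hΛker : Λ = ((diffMod m (⟨0, by omega⟩ : Fin r)).comp (sumZero _).subtype).ker := by
    ext x
    simp only [hΛ, Nat.intCast_dvd_mul_iff_dvd_div_gcd hg, AddMonoidHom.mem_ker,
      AddMonoidHom.comp_apply, AddSubgroup.coe_subtype, diffMod_eq_zero_iff, m]
  have hindex := index_ker_diffMod_comp_subtype m (⟨0, by omega⟩ : Fin r)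
  rw [← hΛker, Fintype.card_fin] at hindex
  refine ⟨fun h => ?_, ?_⟩
  · rw [h, zero_mul] at hindex
    exact pow_ne_zero _ (NeZero.ne m) hindex.symm
  · calc Λ.index * (Nat.gcd (b * r) n * Nat.gcd b n ^ (r - 2))
        = Λ.index * Nat.gcd r m * Nat.gcd b n ^ (r - 2 + 1) := by
          rw [Nat.gcd_mul_eq_gcd_mul_gcd_div]; ring
      _ = n ^ (r - 1) := by
          rw [hindex, show r - 2 + 1 = r - 1 by omega, ← mul_pow, hmn]

/-- For `L = {x ∈ ℤ^r : ∑ xᵢ = 0}` and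
`Λ = {x ∈ L : n ∣ b(xᵢ - xⱼ) for all i,j}`, the index of `Λ` in `L` is finite and equals
`n^(r-1) / (gcd(br,n)·gcd(b,n)^(r-2))`. -/
theorem stmt_3 (n b r : ℕ) (hn : 1 ≤ n) (hb : 1 ≤ b) (hr : 2 ≤ r)
    (L : AddSubgroup (Fin r → ℤ)) (hL : ∀ x, x ∈ L ↔ (∑ i, x i) = 0)
    (Λ : AddSubgroup L)
    (hΛ : ∀ x : L, x ∈ Λ ↔ ∀ i j : Fin r, (n : ℤ) ∣ (b : ℤ) * ((x : Fin r → ℤ) i - (x : Fin r → ℤ) j)) :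
    Λ.index ≠ 0 ∧
      Λ.index * (Nat.gcd (b * r) n * Nat.gcd b n ^ (r - 2)) = n ^ (r - 1) :=
  stmt_3_general n b r hn hr L hL Λ hΛ
end

section
/- Let K be a field, v ∈ K with v ≠ 0, and for nonzero z ∈ K with 1 − vz ≠ 0 define R(z) ∈ End(K² ⊗ K²) in the basis v₊, v₋ by: R(z)(v₊⊗v₊) = ((−v+z)/(1−vz))·v₊⊗v₊, R(z)(v₋⊗v₋) = v₋⊗v₋, R(z)(v₊⊗v₋) = (v(1−z)/(1−vz))·v₊⊗v₋ + ((1−v)z/(1−vz))·v₋⊗v₊, R(z)(v₋⊗v₊) = ((1−z)/(1−vz))·v₋⊗v₊ + ((1−v)/(1−vz))·v₊⊗v₋. Then R satisfies the parametrized Yang–Baxter equation R_{12}(z_i/z_j) R_{13}(z_i/z_k) R_{23}(z_j/z_k) = R_{23}(z_j/z_k) R_{13}(z_i/z_k) R_{12}(z_i/z_j) on K² ⊗ K² ⊗ K², whenever all the relevant denominators are nonzero. -/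
open Matrix

/-- The R-matrix of Figure 4 (case `n_Q = 1`) on `K² ⊗ K²`, in the basis indexed by
`Bool` with `true = +`, `false = -`.  The entry `RmatTwo v z p q` is the coefficient of
the basis vector `p` in `R(z)` applied to the basis vector `q`. -/
def RmatTwo {K : Type*} [Field K] (v z : K) : Matrix (Bool × Bool) (Bool × Bool) K :=
  fun p q =>
    if p = q then
      (if p = (true, true) then (-v + z) / (1 - v * z)
       else if p = (false, false) then 1
       else if p = (true, false) then v * (1 - z) / (1 - v * z)
       else (1 - z) / (1 - v * z))
    else if p.1 = q.2 ∧ p.2 = q.1 then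
      (if p = (false, true) then (1 - v) * z / (1 - v * z)
       else if p = (true, false) then (1 - v) / (1 - v * z)
       else 0)
    else 0

/-- `R₁₂`: act by `M` on tensor factors 1,2 of `V ⊗ V ⊗ V`. -/
def R12 {K : Type*} [Field K] (M : Matrix (Bool × Bool) (Bool × Bool) K) :
    Matrix (Bool × Bool × Bool) (Bool × Bool × Bool) K :=
  fun p q => M (p.1, p.2.1) (q.1, q.2.1) * (if p.2.2 = q.2.2 then 1 else 0)

/-- `R₁₃`: act by `M` on tensor factors 1,3 of `V ⊗ V ⊗ V`. -/
def R13 {K : Type*} [Field K] (M : Matrix (Bool × Bool) (Bool × Bool) K) :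
    Matrix (Bool × Bool × Bool) (Bool × Bool × Bool) K :=
  fun p q => M (p.1, p.2.2) (q.1, q.2.2) * (if p.2.1 = q.2.1 then 1 else 0)

/-- `R₂₃`: act by `M` on tensor factors 2,3 of `V ⊗ V ⊗ V`. -/
def R23 {K : Type*} [Field K] (M : Matrix (Bool × Bool) (Bool × Bool) K) :
    Matrix (Bool × Bool × Bool) (Bool × Bool × Bool) K :=
  fun p q => M (p.2.1, p.2.2) (q.2.1, q.2.2) * (if p.1 = q.1 then 1 else 0)


/-- Denominator-cleared R-matrix: `Qmat v a b = (b - v*a) • RmatTwo v (a/b)`. -/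
def Qmat {K : Type*} [Field K] (v a b : K) : Matrix (Bool × Bool) (Bool × Bool) K :=
  fun p q => match p, q with
  | (true, true), (true, true) => a - v * b
  | (false, false), (false, false) => b - v * a
  | (true, false), (true, false) => v * (b - a)
  | (false, true), (false, true) => b - a
  | (false, true), (true, false) => (1 - v) * a
  | (true, false), (false, true) => (1 - v) * b
  | _, _ => 0

set_option maxHeartbeats 4000000 in
lemma qybe {K : Type*} [Field K] (v zi zj zk : K) :
    R12 (Qmat v zi zj) * R13 (Qmat v zi zk) * R23 (Qmat v zj zk) =
      R23 (Qmat v zj zk) * R13 (Qmat v zi zk) * R12 (Qmat v zi zj) := by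
  ext ⟨a, b, c⟩ ⟨d, e, f⟩
  rcases a <;> rcases b <;> rcases c <;> rcases d <;> rcases e <;> rcases f <;>
    · simp only [Matrix.mul_apply, Fintype.sum_prod_type, Fintype.sum_bool, R12, R13, R23,
        Qmat, if_true, if_false, reduceIte, reduceCtorEq, ite_false, ite_true, mul_one,
        mul_zero, zero_mul, one_mul, add_zero, zero_add]
      try ring

set_option maxHeartbeats 2000000 in
lemma r_eq_q {K : Type*} [Field K] (v a b : K) (hb : b ≠ 0) (h : b - v * a ≠ 0) :
    RmatTwo v (a / b) = (b - v * a)⁻¹ • Qmat v a b := by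
  have hd : 1 - v * (a / b) ≠ 0 := by
    intro hcon
    apply h
    field_simp at hcon
    linear_combination hcon
  ext ⟨p1, p2⟩ ⟨q1, q2⟩
  rcases p1 <;> rcases p2 <;> rcases q1 <;> rcases q2 <;>
    · simp only [RmatTwo, Qmat, Matrix.smul_apply, smul_eq_mul, Prod.mk.injEq,
        reduceCtorEq, and_true, and_false, true_and, false_and, and_self, if_true,
        if_false, reduceIte, ite_false, ite_true, mul_zero]
      try field_simp
      try ring

lemma R12_smul {K : Type*} [Field K] (c : K) (M : Matrix (Bool × Bool) (Bool × Bool) K) :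
    R12 (c • M) = c • R12 M := by
  ext p q; simp [R12, mul_assoc]

lemma R13_smul {K : Type*} [Field K] (c : K) (M : Matrix (Bool × Bool) (Bool × Bool) K) :
    R13 (c • M) = c • R13 M := by
  ext p q; simp [R13, mul_assoc]

lemma R23_smul {K : Type*} [Field K] (c : K) (M : Matrix (Bool × Bool) (Bool × Bool) K) :
    R23 (c • M) = c • R23 M := by
  ext p q; simp [R23, mul_assoc]

/-- the R-matrix `RmatTwo` satisfies the parametrized Yang–Baxter equation
`R₁₂(z_i/z_j) R₁₃(z_i/z_k) R₂₃(z_j/z_k) = R₂₃(z_j/z_k) R₁₃(z_i/z_k) R₁₂(z_i/z_j)`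
whenever all relevant denominators are nonzero. -/
theorem stmt_15 {K : Type*} [Field K] (v zi zj zk : K)
    (hv : v ≠ 0) (hzi : zi ≠ 0) (hzj : zj ≠ 0) (hzk : zk ≠ 0)
    (h1 : 1 - v * (zi / zj) ≠ 0) (h2 : 1 - v * (zi / zk) ≠ 0) (h3 : 1 - v * (zj / zk) ≠ 0) :
    R12 (RmatTwo v (zi / zj)) * R13 (RmatTwo v (zi / zk)) * R23 (RmatTwo v (zj / zk)) =
      R23 (RmatTwo v (zj / zk)) * R13 (RmatTwo v (zi / zk)) * R12 (RmatTwo v (zi / zj)) := by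
  have hji : zj - v * zi ≠ 0 := by
    intro h; apply h1; field_simp; linear_combination h
  have hki : zk - v * zi ≠ 0 := by
    intro h; apply h2; field_simp; linear_combination h
  have hkj : zk - v * zj ≠ 0 := by
    intro h; apply h3; field_simp; linear_combination h
  rw [r_eq_q v zi zj hzj hji, r_eq_q v zi zk hzk hki, r_eq_q v zj zk hzk hkj,
    R12_smul, R13_smul, R23_smul]
  simp only [Matrix.smul_mul, Matrix.mul_smul, smul_smul, qybe]
  congr 1
  ring
end

section
/- Let K be a field, v ∈ K nonzero, n ≥ 1, and let g : ℤ/nℤ → K satisfy g(0) = −v and g(t)·g(−t) = v for t ≠ 0. For nonzero z with 1 − vz ≠ 0 define R(z) ∈ End(K^{n+1} ⊗ K^{n+1}) on basis v₀, v₁, ..., v_n by: R(z)(v₀⊗v₀) = v₀⊗v₀; R(z)(v_a⊗v_a) = ((−v+z)/(1−vz))·v_a⊗v_a for a ≥ 1; for 1 ≤ a ≠ b ≤ n, R(z)(v_a⊗v_b) = g(a−b)((1−z)/(1−vz))·v_a⊗v_b + ((1−v)/(1−vz))·(z^{[a>b]})·v_b⊗v_a where the factor is (1−v)z/(1−vz)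 if a > b and (1−v)/(1−vz) if a < b; R(z)(v_a⊗v₀) = (v(1−z)/(1−vz))·v_a⊗v₀ + ((1−v)z/(1−vz))·v₀⊗v_a and R(z)(v₀⊗v_a) = ((1−z)/(1−vz))·v₀⊗v_a + ((1−v)/(1−vz))·v_a⊗v₀ for a ≥ 1. Then R(z)·R̂(1/z) = Id, where R̂(1/z) is defined by the same formulas with z replaced by 1/z and the roles of the two tensor factors exchanged (i.e. with the ordering condition a > b reversed). -/
open Matrix

/-- The `ĝl(1|n)`-type R-matrix of Figure 4 on `K^{n+1} ⊗ K^{n+1}`, with basis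
`v₀, v₁, ..., v_n` indexed by `Fin (n+1)`.  `RmatG n v z g p q` is the coefficient of the
basis vector `v_{p.1} ⊗ v_{p.2}` in `R(z)(v_{q.1} ⊗ v_{q.2})`:
* `R(z)(v₀⊗v₀) = v₀⊗v₀`;
* `R(z)(v_a⊗v_a) = ((-v+z)/(1-vz))·v_a⊗v_a` for `a ≥ 1`;
* for `1 ≤ a ≠ b`: the `v_a⊗v_b` coefficient is `g(a-b)(1-z)/(1-vz)` and the `v_b⊗v_a`
  coefficient is `(1-v)z/(1-vz)` if `a > b`, `(1-v)/(1-vz)` if `a < b`;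
* `R(z)(v_a⊗v₀) = (v(1-z)/(1-vz))·v_a⊗v₀ + ((1-v)z/(1-vz))·v₀⊗v_a`;
* `R(z)(v₀⊗v_a) = ((1-z)/(1-vz))·v₀⊗v_a + ((1-v)/(1-vz))·v_a⊗v₀`. -/
def RmatG {K : Type*} [Field K] (n : ℕ) (v z : K) (g : ZMod n → K) :
    Matrix (Fin (n + 1) × Fin (n + 1)) (Fin (n + 1) × Fin (n + 1)) K :=
  fun p q =>
    if p = q then
      (if p.1 = p.2 then (if p.1 = 0 then 1 else (-v + z) / (1 - v * z))
       else if p.2 = 0 then v * (1 - z) / (1 - v * z)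
       else if p.1 = 0 then (1 - z) / (1 - v * z)
       else g ((((p.1 : ℕ) : ℤ) - ((p.2 : ℕ) : ℤ) : ℤ)) * ((1 - z) / (1 - v * z)))
    else if p.1 = q.2 ∧ p.2 = q.1 then
      ((1 - v) / (1 - v * z)) * (if p.1 < p.2 then z else 1)
    else 0

/-- `R̂(w)`: the same formulas as `RmatG` with the roles of the two tensor factors
exchanged (equivalently, with the ordering condition `a > b` reversed). -/
def RhatG {K : Type*} [Field K] (n : ℕ) (v w : K) (g : ZMod n → K) :
    Matrix (Fin (n + 1) × Fin (n + 1)) (Fin (n + 1) × Fin (n + 1)) K :=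
  fun p q => RmatG n v w g (p.2, p.1) (q.2, q.1)

lemma RmatG_eq_zero' {K : Type*} [Field K] (n : ℕ) (v z : K) (g : ZMod n → K)
    {p q : Fin (n + 1) × Fin (n + 1)} (h : q ≠ p) (h2 : q ≠ (p.2, p.1)) :
    RmatG n v z g p q = 0 := by
  unfold RmatG
  rw [if_neg (fun hh => h hh.symm), if_neg]
  rintro ⟨ha, hb⟩
  exact h2 (Prod.ext hb.symm ha.symm)

set_option maxHeartbeats 4000000 in
theorem stmt_16_aux {K : Type*} [Field K] (n : ℕ) (hn : 1 ≤ n) (v z : K)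
    (hv : v ≠ 0) (hz : z ≠ 0) (h1 : 1 - v * z ≠ 0) (h2 : 1 - v * z⁻¹ ≠ 0)
    (g : ZMod n → K) (hg0 : g 0 = -v) (hg : ∀ t : ZMod n, t ≠ 0 → g t * g (-t) = v) :
    RmatG n v z g * RhatG n v z⁻¹ g = 1 := by
  have h3 : z - v ≠ 0 := by
    intro h
    have hzv : z = v := by rwa [sub_eq_zero] at h
    subst hzv
    exact h2 (by field_simp; exact sub_self 1)
  have e2 : (1:K) - v * z⁻¹ = (z - v) * z⁻¹ := by field_simp
  ext p q
  rw [Matrix.mul_apply, Matrix.one_apply]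
  have hsum : ∑ r, RmatG n v z g p r * RhatG n v z⁻¹ g r q
      = ∑ r ∈ ({p, (p.2, p.1)} : Finset _), RmatG n v z g p r * RhatG n v z⁻¹ g r q := by
    symm
    apply Finset.sum_subset (Finset.subset_univ _)
    intro r _ hr
    simp only [Finset.mem_insert, Finset.mem_singleton, not_or] at hr
    rw [RmatG_eq_zero' n v z g hr.1 hr.2, zero_mul]
  rw [hsum]
  obtain ⟨a, b⟩ := p
  obtain ⟨c, d⟩ := q
  simp only at *
  by_cases hab : a = b
  · -- diagonal row
    subst hab
    rw [show ({(a,a), (a,a)} : Finset (Fin (n+1) × Fin (n+1))) = {(a,a)} from by simp,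
      Finset.sum_singleton]
    by_cases hq : (c, d) = ((a : Fin (n+1)), (a : Fin (n+1)))
    · rw [hq, if_pos rfl]
      rw [RhatG]
      simp only [RmatG, if_pos rfl]
      by_cases ha0 : a = 0
      · simp [ha0]
      · simp [ha0]
        rw [e2]; field_simp; ring
    · rw [if_neg (fun hh => hq hh.symm)]
      rw [RhatG, RmatG_eq_zero' n v z⁻¹ g, mul_zero]
      · intro hh
        exact hq (by simpa [Prod.ext_iff, and_comm] using hh)
      · intro hh
        exact hq (by simpa [Prod.ext_iff, and_comm] using hh)
  · -- off-diagonal row: a ≠ b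
    have hba : ¬ b = a := fun h => hab h.symm
    rw [Finset.sum_pair (by simp [Prod.ext_iff, hab])]
    by_cases hq1 : (c, d) = (a, b)
    · rw [hq1, if_pos rfl]
      simp only [RhatG, RmatG, Prod.mk.injEq]
      by_cases hb0 : b = 0
      · subst hb0
        have ha0 : ¬ a = 0 := hab
        have hpos : (0 : Fin (n+1)) < a := Fin.pos_iff_ne_zero.mpr ha0
        simp [hab, hba, ha0, hpos, not_lt_of_gt hpos]
        rw [e2]; field_simp; ring
      · by_cases ha0 : a = 0
        · subst ha0
          have hpos : (0 : Fin (n+1)) < b := Fin.pos_iff_ne_zero.mpr hb0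
          simp [hab, hba, hb0, hpos, not_lt_of_gt hpos]
          rw [e2]; field_simp
          have hX : (1 - z * v) * (1 - z * v)⁻¹ = 1 := mul_inv_cancel₀ (by rwa [mul_comm] at h1)
          linear_combination (z - v) * hX
        · -- both nonzero: g case
          have hgg : g ((((a : ℕ) : ℤ) - ((b : ℕ) : ℤ) : ℤ)) * g ((((b : ℕ) : ℤ) - ((a : ℕ) : ℤ) : ℤ)) = v := by
            have hcast : (((((b : ℕ) : ℤ) - ((a : ℕ) : ℤ) : ℤ)) : ZMod n) = -(((((a : ℕ) : ℤ) - ((b : ℕ) : ℤ) : ℤ)) : ZMod n) := by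
              push_cast; ring
            rw [hcast]
            apply hg
            intro h0
            rw [ZMod.intCast_zmod_eq_zero_iff_dvd] at h0
            have hzero : ((a : ℕ) : ℤ) - ((b : ℕ) : ℤ) = 0 := by
              apply Int.eq_zero_of_abs_lt_dvd h0
              have ha' : (a : ℕ) < n + 1 := a.isLt
              have hb' : (b : ℕ) < n + 1 := b.isLt
              have ha1 : 1 ≤ (a : ℕ) := Nat.one_le_iff_ne_zero.mpr (fun h => ha0 (Fin.ext h))
              have hb1 : 1 ≤ (b : ℕ) := Nat.one_le_iff_ne_zero.mpr (fun h => hb0 (Fin.ext h))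
              rw [abs_lt]
              omega
            exact hab (Fin.ext (by omega))
          set G1 := g ((((a : ℕ) : ℤ) - ((b : ℕ) : ℤ) : ℤ) : ZMod n) with hG1
          set G2 := g ((((b : ℕ) : ℤ) - ((a : ℕ) : ℤ) : ℤ) : ZMod n) with hG2
          rw [← hgg] at h1 h3 e2 ⊢
          rcases lt_or_gt_of_ne (fun h : a = b => hab h) with hlt | hlt
          · simp [hab, hba, ha0, hb0, hlt, lt_asymm hlt]
            rw [e2]; field_simp
            have hX : (1 - G1 * z * G2) * (1 - G1 * z * G2)⁻¹ = 1 := mul_inv_cancel₀ (by rwa [mul_right_comm] at h1)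
            linear_combination (z - G1 * G2) * hX
          · simp [hab, hba, ha0, hb0, hlt, not_lt_of_gt hlt]
            rw [e2]; field_simp
            have hX : (1 - G1 * z * G2) * (1 - G1 * z * G2)⁻¹ = 1 := mul_inv_cancel₀ (by rwa [mul_right_comm] at h1)
            linear_combination (z - G1 * G2) * hX
    · by_cases hq2 : (c, d) = (b, a)
      · rw [if_neg (fun h => hq1 h.symm), hq2]
        simp only [RhatG, RmatG, Prod.mk.injEq]
        by_cases hb0 : b = 0
        · subst hb0
          have ha0 : ¬ a = 0 := hab
          have hpos : (0 : Fin (n+1)) < a := Fin.pos_iff_ne_zero.mpr ha0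
          simp [hab, hba, ha0, hpos, not_lt_of_gt hpos]
          rw [e2]; field_simp; ring
        · by_cases ha0 : a = 0
          · subst ha0
            have hpos : (0 : Fin (n+1)) < b := Fin.pos_iff_ne_zero.mpr hb0
            simp [hab, hba, hb0, hpos, not_lt_of_gt hpos]
            rw [e2]; field_simp; ring
          · set G1 := g ((((a : ℕ) : ℤ) - ((b : ℕ) : ℤ) : ℤ) : ZMod n) with hG1
            rcases lt_or_gt_of_ne (fun h : a = b => hab h) with hlt | hlt
            · simp [hab, hba, ha0, hb0, hlt, lt_asymm hlt]
              rw [e2]; field_simp; ring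
            · simp [hab, hba, ha0, hb0, hlt, not_lt_of_gt hlt]
              rw [e2]
              field_simp
              ring
      · rw [if_neg (fun h => hq1 h.symm)]
        rw [RhatG, RhatG, RmatG_eq_zero' n v z⁻¹ g, RmatG_eq_zero' n v z⁻¹ g, mul_zero, mul_zero, add_zero]
        · intro h
          exact hq2 (by simpa [Prod.ext_iff, and_comm] using h)
        · intro h
          exact hq1 (by simpa [Prod.ext_iff, and_comm] using h)
        · intro h
          exact hq1 (by simpa [Prod.ext_iff, and_comm] using h)
        · intro h
          exact hq2 (by simpa [Prod.ext_iff, and_comm] using h)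

/-- unitarity of the Drinfeld-twisted `ĝl(1|n)`-type R-matrix:
`R(z) · R̂(1/z) = Id`, given `g(0) = -v` and `g(t)g(-t) = v` for `t ≠ 0`. -/
theorem stmt_16 {K : Type*} [Field K] (n : ℕ) (hn : 1 ≤ n) (v z : K)
    (hv : v ≠ 0) (hz : z ≠ 0) (h1 : 1 - v * z ≠ 0) (h2 : 1 - v * z⁻¹ ≠ 0)
    (g : ZMod n → K) (hg0 : g 0 = -v) (hg : ∀ t : ZMod n, t ≠ 0 → g t * g (-t) = v) :
    RmatG n v z g * RhatG n v z⁻¹ g = 1 := 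
  stmt_16_aux n hn v z hv hz h1 h2 g hg0 hg
end
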